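/- With the canonical normalization of the inner product on an irreducible root system Φ of rank l (i.e., ‖θ‖⁻² equals the dual Coxeter number), one has Σ_{φ∈Φ} ‖φ‖² = l. -/

import Mathlib

open scoped RealInnerProductSpace BigOperators

noncomputable section

variable (V : Type) [NormedAddCommGroup V] [InnerProductSpace ℝ V] [FiniteDimensional ℝ V]

/-- A finite, reduced, crystallographic root system in a Euclidean space `V`,
with a chosen set of positive roots and the corresponding simple roots. -/
structure RootSystemData where
  /-- the rank -/
  l : ℕ
  /-- the simple roots -/
  simple : Fin l → V
  /-- the set of roots -/
  roots : Finset V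
  /-- the set of positive roots -/
  pos : Finset V
  pos_subset : pos ⊆ roots
  simple_mem_pos : ∀ i, simple i ∈ pos
  simple_indep : LinearIndependent ℝ simple
  span_roots : Submodule.span ℝ (roots : Set V) = ⊤
  root_ne_zero : ∀ α ∈ roots, α ≠ 0
  neg_mem : ∀ α ∈ roots, -α ∈ roots
  pos_iff : ∀ α ∈ roots, (α ∈ pos ↔ -α ∉ pos)
  pos_combo : ∀ α ∈ pos, ∃ c : Fin l → ℕ, α = ∑ i, (c i : ℝ) • simple i
  crystal : ∀ α ∈ roots, ∀ β ∈ roots, ∃ n : ℤ, 2 * ⟪β, α⟫ / ⟪α, α⟫ = (n : ℝ)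
  reflect_mem : ∀ α ∈ roots, ∀ β ∈ roots, β - (2 * ⟪β, α⟫ / ⟪α, α⟫) • α ∈ roots
  sub_mem : ∀ α ∈ roots, ∀ β ∈ roots, 0 < ⟪α, β⟫ → α ≠ β → α - β ∈ roots
  reduced : ∀ α ∈ roots, ∀ c : ℝ, c • α ∈ roots → c = 1 ∨ c = -1

namespace RootSystemData

open Classical

variable {V}

/-- The pairing `⟨λ, α∨⟩ = 2(λ|α)/(α|α)` of a vector with the coroot of `α`. -/
def pair (lam α : V) : ℝ := 2 * ⟪lam, α⟫ / ⟪α, α⟫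

/-- The orthogonal reflection in the hyperplane orthogonal to `α`. -/
def sRefl (α : V) : V ≃ₗᵢ[ℝ] V := Submodule.reflection ((ℝ ∙ α)ᗮ)

variable (R : RootSystemData V)

/-- Half the sum of the positive roots. -/
def ρ : V := (2 : ℝ)⁻¹ • ∑ φ ∈ R.pos, φ

/-- The (finite) Weyl group, generated by the simple reflections. -/
def W : Subgroup (V ≃ₗᵢ[ℝ] V) :=
  Subgroup.closure (Set.range fun i => sRefl (R.simple i))

/-- The length of a Weyl group element: the minimal length of a word in the
simple reflections expressing it. -/
def len (w : V ≃ₗᵢ[ℝ] V) : ℕ :=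
  sInf {k : ℕ | ∃ f : Fin k → Fin R.l,
    w = (List.ofFn fun j => sRefl (R.simple (f j))).prod}

/-- The inversion set `Φ_w = Φ₊ ∩ wΦ₋`. -/
def inversions (w : V ≃ₗᵢ[ℝ] V) : Finset V :=
  R.pos.filter fun x => -(w.symm x) ∈ R.pos

end RootSystemData

/-- An irreducible root system, together with its highest root `θ`. -/
structure IrredRootSystemData extends RootSystemData V where
  /-- the highest root -/
  θ : V
  θ_mem_pos : θ ∈ pos
  θ_highest : ∀ φ ∈ pos, ∃ c : Fin l → ℕ, θ - φ = ∑ i, (c i : ℝ) • simple i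
  θ_long : ∀ φ ∈ roots, ‖φ‖ ≤ ‖θ‖
  θ_dominant : ∀ i, 0 ≤ ⟪θ, simple i⟫
  irreducible : ∀ s : Finset V, s ⊆ roots →
      (∀ α ∈ s, ∀ β ∈ roots, β ∉ s → ⟪α, β⟫ = 0) → s = ∅ ∨ s = roots

namespace IrredRootSystemData

variable {V} (R : IrredRootSystemData V)

/-- The affine functional `L(φ) = 2(θ−φ|ρ)/(θ|θ)`. -/
def L (φ : V) : ℝ := 2 * ⟪R.θ - φ, R.toRootSystemData.ρ⟫ / ⟪R.θ, R.θ⟫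

/-- A root is long if it has the same length as the highest root. -/
def IsLong (φ : V) : Prop := ‖φ‖ = ‖R.θ‖

/-- The dual Coxeter number `g = ⟨ρ, θ∨⟩ + 1`. -/
def dualCox : ℝ := RootSystemData.pair R.toRootSystemData.ρ R.θ + 1

/-- The affine reflection `s₀(λ) = λ − (⟨λ,θ∨⟩ − g)θ` (scaled so that `s₀ρ = ρ + θ`). -/
def s0 (lam : V) : V := lam - (RootSystemData.pair lam R.θ - R.dualCox) • R.θ

end IrredRootSystemData


/-!
The frame operator `S v = ∑_{φ ∈ Φ} ⟪φ, v⟫ φ` is symmetric and commutes with every root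
reflection; since the reflections act irreducibly, `S` is a scalar `c` (Schur). The trace of `S`
is `∑ ‖φ‖² = c · l`. Evaluating `⟪S θ, θ⟫ = ∑ ⟪φ, θ⟫²` with `⟨φ, θ∨⟩ ∈ {0, 1}` for positive
roots `φ ≠ θ` gives `c = g ‖θ‖²`, which is `1` under the canonical normalization.
-/

section FrameOperator

variable {E : Type*} [NormedAddCommGroup E] [InnerProductSpace ℝ E]

def frameOperator (s : Finset E) : E →ₗ[ℝ] E :=
  ∑ φ ∈ s, (innerₛₗ ℝ φ).smulRight φ

theorem frameOperator_apply (s : Finset E) (v : E) :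
    frameOperator s v = ∑ φ ∈ s, ⟪φ, v⟫ • φ := by
  simp [frameOperator]

theorem inner_frameOperator_left (s : Finset E) (v w : E) :
    ⟪frameOperator s v, w⟫ = ∑ φ ∈ s, ⟪φ, v⟫ * ⟪φ, w⟫ := by
  simp only [frameOperator_apply, sum_inner, real_inner_smul_left]

theorem isSymmetric_frameOperator (s : Finset E) : (frameOperator s).IsSymmetric := by
  intro v w
  rw [inner_frameOperator_left, real_inner_comm, inner_frameOperator_left]
  exact Finset.sum_congr rfl fun φ _ => mul_comm _ _

theorem trace_frameOperator [FiniteDimensional ℝ E] (s : Finset E) :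
    LinearMap.trace ℝ E (frameOperator s) = ∑ φ ∈ s, ⟪φ, φ⟫ := by
  simp [frameOperator]

theorem frameOperator_apply_isometry (s : Finset E) (g : E ≃ₗᵢ[ℝ] E)
    (hg : ∀ φ, g φ ∈ s ↔ φ ∈ s) (v : E) : frameOperator s (g v) = g (frameOperator s v) := by
  rw [frameOperator_apply, frameOperator_apply, map_sum]
  refine Finset.sum_equiv g.symm.toEquiv (fun φ => by simpa using hg (g.symm φ))
    fun φ _ => ?_
  simp [← g.inner_map_map (g.symm φ) v]

end FrameOperator

namespace RootSystemData

variable {E : Type} [NormedAddCommGroup E] [InnerProductSpace ℝ E] (R : RootSystemData E)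

theorem sRefl_apply (α v : E) : sRefl α v = v - pair v α • α := by
  rw [sRefl, Submodule.reflection_orthogonal_apply, Submodule.reflection_singleton_apply, pair,
    real_inner_self_eq_norm_sq, real_inner_comm, neg_sub, ← Nat.cast_smul_eq_nsmul ℝ, smul_smul]
  simp only [RCLike.ofReal_real_eq_id, id, Nat.cast_ofNat, mul_div_assoc]

theorem mem_or_mem_orthogonal_of_sRefl_mem {α : E} {K : Submodule ℝ E}
    (hK : ∀ v ∈ K, sRefl α v ∈ K) : α ∈ K ∨ α ∈ Kᗮ := by
  by_contra! h
  obtain ⟨v, hv, hαv⟩ : ∃ v ∈ K, ⟪α, v⟫ ≠ 0 := by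
    simpa [Submodule.mem_orthogonal'] using h.2
  have hα : α ≠ 0 := by rintro rfl; exact h.1 K.zero_mem
  have hpair : pair v α ≠ 0 := by
    rw [pair, real_inner_comm]
    exact div_ne_zero (mul_ne_zero two_ne_zero hαv) (inner_self_ne_zero.2 hα)
  have : pair v α • α ∈ K := by simpa [sRefl_apply] using K.sub_mem hv (hK v hv)
  exact h.1 ((K.smul_mem_iff hpair).1 this)

theorem sRefl_mem_roots_iff {α : E} (hα : α ∈ R.roots) (φ : E) :
    sRefl α φ ∈ R.roots ↔ φ ∈ R.roots := by
  have maps_to : ∀ φ ∈ R.roots, sRefl α φ ∈ R.roots := fun φ hφ => by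
    simpa [sRefl_apply, pair] using R.reflect_mem α hα φ hφ
  refine ⟨fun h => ?_, maps_to φ⟩
  simpa [sRefl] using maps_to _ h

theorem mem_pos_or_neg_mem_pos {α : E} (hα : α ∈ R.roots) : α ∈ R.pos ∨ -α ∈ R.pos :=
  or_iff_not_imp_right.2 (R.pos_iff α hα).2

theorem finrank_eq_l : Module.finrank ℝ E = R.l := by
  have pos_le : ∀ α ∈ R.pos, α ∈ Submodule.span ℝ (Set.range R.simple) := by
    intro α hα
    obtain ⟨c, rfl⟩ := R.pos_combo α hα
    exact Submodule.sum_mem _ fun i _ => Submodule.smul_mem _ _ (Submodule.subset_span ⟨i, rfl⟩)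
  have hspan : ⊤ ≤ Submodule.span ℝ (Set.range R.simple) := by
    rw [← R.span_roots, Submodule.span_le]
    intro α hα
    rcases R.mem_pos_or_neg_mem_pos hα with h | h
    · exact pos_le α h
    · simpa using Submodule.neg_mem _ (pos_le _ h)
  rw [Module.finrank_eq_card_basis (Module.Basis.mk R.simple_indep hspan), Fintype.card_fin]

theorem sum_roots_eq_two_nsmul_sum_pos {M : Type*} [AddCommMonoid M] (f : E → M)
    (hf : ∀ x, f (-x) = f x) : ∑ φ ∈ R.roots, f φ = 2 • ∑ φ ∈ R.pos, f φ := by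
  classical
  have hneg : ∑ φ ∈ R.roots \ R.pos, f φ = ∑ φ ∈ R.pos, f φ := by
    refine (Finset.sum_equiv (Equiv.neg E) (fun φ => ?_) fun φ _ => (hf φ).symm).symm
    simp only [Equiv.neg_apply, Finset.mem_sdiff]
    refine ⟨fun h => ⟨R.neg_mem φ (R.pos_subset h), (R.pos_iff φ (R.pos_subset h)).1 h⟩,
      fun ⟨hr, hp⟩ => ?_⟩
    simpa using (R.pos_iff _ hr).not.1 hp
  rw [← Finset.sum_sdiff R.pos_subset, hneg, two_nsmul]

theorem sum_pos_inner_eq_two_mul_inner_ρ (v : E) : ∑ φ ∈ R.pos, ⟪φ, v⟫ = 2 * ⟪R.ρ, v⟫ := by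
  rw [ρ, real_inner_smul_left, sum_inner]
  ring

end RootSystemData

namespace IrredRootSystemData

open RootSystemData

variable {E : Type} [NormedAddCommGroup E] [InnerProductSpace ℝ E] (R : IrredRootSystemData E)

theorem theta_mem_roots : R.θ ∈ R.roots := R.pos_subset R.θ_mem_pos

theorem inner_theta_self_pos : 0 < ⟪R.θ, R.θ⟫ :=
  real_inner_self_pos.2 (R.root_ne_zero _ R.theta_mem_roots)

theorem eq_bot_or_eq_top_of_sRefl_mem (K : Submodule ℝ E)
    (hK : ∀ α ∈ R.roots, ∀ v ∈ K, sRefl α v ∈ K) : K = ⊥ ∨ K = ⊤ := by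
  classical
  have mem_orth : ∀ β ∈ R.roots, β ∉ K → β ∈ Kᗮ := fun β hβ hβK =>
    (mem_or_mem_orthogonal_of_sRefl_mem (hK β hβ)).resolve_left hβK
  rcases R.irreducible (R.roots.filter (· ∈ K)) (Finset.filter_subset _ _) (by
      simp only [Finset.mem_filter, not_and]
      exact fun α ⟨_, hαK⟩ β hβ hβK =>
        Submodule.inner_right_of_mem_orthogonal hαK (mem_orth β hβ (hβK hβ))) with h | h
  · left
    rw [← Submodule.orthogonal_eq_top_iff, eq_top_iff, ← R.span_roots, Submodule.span_le]
    intro β hβ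
    refine mem_orth β hβ fun hβK => ?_
    simpa [h] using Finset.mem_filter.2 ⟨hβ, hβK⟩
  · right
    rw [eq_top_iff, ← R.span_roots, Submodule.span_le]
    intro β hβ
    rw [← h] at hβ
    exact (Finset.mem_filter.1 hβ).2

theorem exists_eq_smul_id_of_isSymmetric [FiniteDimensional ℝ E] {T : E →ₗ[ℝ] E}
    (hT : T.IsSymmetric) (hcomm : ∀ α ∈ R.roots, ∀ v, T (sRefl α v) = sRefl α (T v)) :
    ∃ c : ℝ, T = c • LinearMap.id := by
  have : Nontrivial E := ⟨⟨R.θ, 0, R.root_ne_zero _ R.theta_mem_roots⟩⟩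
  obtain ⟨μ, hμ⟩ : ∃ μ, Module.End.HasEigenvalue T μ :=
    ⟨_, hT.hasEigenvalue_iSup_of_finiteDimensional⟩
  have hinv : ∀ α ∈ R.roots, ∀ v ∈ Module.End.eigenspace T μ,
      sRefl α v ∈ Module.End.eigenspace T μ := by
    intro α hα v hv
    rw [Module.End.mem_eigenspace_iff] at hv ⊢
    rw [hcomm α hα, hv, map_smul]
  rcases R.eq_bot_or_eq_top_of_sRefl_mem _ hinv with h | h
  · exact absurd h hμ
  · exact ⟨μ, LinearMap.ext fun v => Module.End.mem_eigenspace_iff.1 (h ▸ Submodule.mem_top)⟩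

theorem inner_theta_nonneg {φ : E} (hφ : φ ∈ R.pos) : 0 ≤ ⟪φ, R.θ⟫ := by
  obtain ⟨c, rfl⟩ := R.pos_combo φ hφ
  rw [sum_inner]
  exact Finset.sum_nonneg fun i _ => by
    rw [real_inner_smul_left, real_inner_comm]
    exact mul_nonneg (Nat.cast_nonneg _) (R.θ_dominant i)

theorem inner_theta_lt {φ : E} (hφ : φ ∈ R.roots) (hne : φ ≠ R.θ) : ⟪φ, R.θ⟫ < ⟪R.θ, R.θ⟫ := by
  have hlen : ⟪φ, φ⟫ ≤ ⟪R.θ, R.θ⟫ := by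
    simp only [real_inner_self_eq_norm_sq]
    exact pow_le_pow_left₀ (norm_nonneg _) (R.θ_long φ hφ) 2
  have hdist : 0 < ⟪R.θ - φ, R.θ - φ⟫ := real_inner_self_pos.2 (sub_ne_zero.2 hne.symm)
  rw [inner_sub_sub_self, real_inner_comm φ R.θ] at hdist
  linarith

theorem inner_theta_eq_zero_or {φ : E} (hφ : φ ∈ R.pos) (hne : φ ≠ R.θ) :
    ⟪φ, R.θ⟫ = 0 ∨ 2 * ⟪φ, R.θ⟫ = ⟪R.θ, R.θ⟫ := by
  have hθ := R.inner_theta_self_pos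
  obtain ⟨n, hn⟩ := R.crystal R.θ R.theta_mem_roots φ (R.pos_subset hφ)
  rw [div_eq_iff hθ.ne'] at hn
  have h0 : (0 : ℝ) ≤ n := by nlinarith [R.inner_theta_nonneg hφ]
  have h2 : (n : ℝ) < 2 := by nlinarith [R.inner_theta_lt (R.pos_subset hφ) hne]
  have : n = 0 ∨ n = 1 := by
    have : 0 ≤ n := by exact_mod_cast h0
    have : n < 2 := by exact_mod_cast h2
    omega
  rcases this with rfl | rfl <;> push_cast at hn
  · left; linarith
  · right; linarith

theorem sum_inner_theta_mul_self :
    ∑ φ ∈ R.roots, ⟪φ, R.θ⟫ * ⟪φ, R.θ⟫ = R.dualCox * (⟪R.θ, R.θ⟫ * ⟪R.θ, R.θ⟫) := by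
  classical
  have hθ := R.inner_theta_self_pos
  have hother : ∀ φ ∈ R.pos.erase R.θ,
      ⟪φ, R.θ⟫ * ⟪φ, R.θ⟫ = ⟪R.θ, R.θ⟫ / 2 * ⟪φ, R.θ⟫ := by
    intro φ hφ
    obtain ⟨hne, hpos⟩ := Finset.mem_erase.1 hφ
    rcases R.inner_theta_eq_zero_or hpos hne with h | h
    · simp [h]
    · rw [← h]; ring
  have hpos : ∑ φ ∈ R.pos, ⟪φ, R.θ⟫ * ⟪φ, R.θ⟫ = ⟪R.θ, R.θ⟫ * ⟪R.θ, R.θ⟫ +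
      ⟪R.θ, R.θ⟫ / 2 * (2 * ⟪R.ρ, R.θ⟫ - ⟪R.θ, R.θ⟫) := by
    rw [← Finset.add_sum_erase _ _ R.θ_mem_pos, Finset.sum_congr rfl hother, ← Finset.mul_sum,
      Finset.sum_erase_eq_sub R.θ_mem_pos, sum_pos_inner_eq_two_mul_inner_ρ]
  rw [sum_roots_eq_two_nsmul_sum_pos _ _ fun x => by simp only [inner_neg_left, neg_mul_neg],
    hpos, dualCox, pair]
  field_simp
  ring

theorem frameOperator_roots_eq [FiniteDimensional ℝ E] :
    frameOperator R.roots = (R.dualCox * ⟪R.θ, R.θ⟫) • LinearMap.id := by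
  obtain ⟨c, hc⟩ := R.exists_eq_smul_id_of_isSymmetric (isSymmetric_frameOperator R.roots)
    fun α hα v => frameOperator_apply_isometry _ _ (R.sRefl_mem_roots_iff hα) v
  have hθθ : c * ⟪R.θ, R.θ⟫ = R.dualCox * ⟪R.θ, R.θ⟫ * ⟪R.θ, R.θ⟫ := by
    simpa [hc, real_inner_smul_left, mul_assoc, sum_inner_theta_mul_self] using
      inner_frameOperator_left R.roots R.θ R.θ
  rw [hc, mul_right_cancel₀ R.inner_theta_self_pos.ne' hθθ]

end IrredRootSystemData

/-- **Brown's formula.** With the canonical normalization `‖θ‖⁻² = g`,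
the sum of the squared lengths of all roots equals the rank `l`. -/
theorem sum_norm_sq_roots_eq_rank (R : IrredRootSystemData V)
    (hnorm : ⟪R.θ, R.θ⟫ = 1 / R.dualCox) :
    ∑ φ ∈ R.roots, ⟪φ, φ⟫ = (R.l : ℝ) := by
  have hg : R.dualCox ≠ 0 := fun hg =>
    R.inner_theta_self_pos.ne' (by rw [hnorm, hg, div_zero])
  rw [← trace_frameOperator, R.frameOperator_roots_eq, hnorm, mul_one_div_cancel hg, one_smul,
    LinearMap.trace_id, R.finrank_eq_l]
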